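/- Let p and n be positive integers with 2p+2 ≤ n ≤ 3p. Then the clique cover number of the p-th power of the cycle C_n is at most n−1. -/

import Mathlib

open SimpleGraph

/-- A finite collection of cliques of `G` covering every edge of `G`. -/
def IsEdgeCliqueCover {V : Type*} (G : SimpleGraph V) (𝒞 : Finset (Set V)) : Prop :=
  (∀ C ∈ 𝒞, G.IsClique C) ∧ ∀ ⦃u v : V⦄, G.Adj u v → ∃ C ∈ 𝒞, u ∈ C ∧ v ∈ C

/-- The (edge) clique cover number of `G`: the least size of an edge clique covering. -/
noncomputable def edgeCliqueCoverNumber {V : Type*} (G : SimpleGraph V) : ℕ :=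
  sInf {k | ∃ 𝒞 : Finset (Set V), IsEdgeCliqueCover G 𝒞 ∧ 𝒞.card = k}

/-- The `p`-th power of the cycle `C_n`: vertices are `ZMod n`, and `u` is adjacent to `v`
iff `u - v` or `v - u` (mod `n`) lies in `{1, …, p}`. -/
def cyclePower (n p : ℕ) : SimpleGraph (ZMod n) where
  Adj u v := u ≠ v ∧ ∃ k : ℕ, 1 ≤ k ∧ k ≤ p ∧ (u - v = (k : ZMod n) ∨ v - u = (k : ZMod n))
  symm := by
    constructor
    rintro u v ⟨hne, k, hk1, hk2, hk⟩
    exact ⟨hne.symm, k, hk1, hk2, hk.symm⟩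
  loopless := by
    constructor
    rintro u ⟨hne, -⟩
    exact hne rfl

/-!
The `n` arcs `{j, j + 1, …, j + p}` of the cycle are cliques and together cover every edge.
When `2p < n ≤ 3p`, the vertices `0, p, 2p` form a triangle. It covers the two edges of length
`p` leaving `0` and `p`, while every shorter edge leaving `0` or `p` lies on the arc starting one
step earlier. So the arcs starting at `0` and `p` can be traded for the triangle, leaving `n - 1`
cliques.
-/

theorem ZMod.natCast_eq_natCast_iff_of_lt {n a b : ℕ} (ha : a < n) (hb : b < n) :
    (a : ZMod n) = b ↔ a = b := by
  rw [ZMod.natCast_eq_natCast_iff', Nat.mod_eq_of_lt ha, Nat.mod_eq_of_lt hb]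

theorem ZMod.natCast_ne_zero_of_pos_of_lt {n a : ℕ} (ha0 : 0 < a) (ha : a < n) :
    (a : ZMod n) ≠ 0 := by
  rw [← Nat.cast_zero, Ne, ZMod.natCast_eq_natCast_iff_of_lt ha (ha0.trans ha)]
  exact ha0.ne'

theorem edgeCliqueCoverNumber_le_card {V : Type*} {G : SimpleGraph V} {𝒞 : Finset (Set V)}
    (h : IsEdgeCliqueCover G 𝒞) : edgeCliqueCoverNumber G ≤ 𝒞.card :=
  Nat.sInf_le ⟨𝒞, h, rfl⟩

namespace cyclePower

variable {n p : ℕ}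

theorem adj_add_natCast (u : ZMod n) {k : ℕ} (hk0 : 1 ≤ k) (hkp : k ≤ p) (hkn : k < n) :
    (cyclePower n p).Adj u (u + k) :=
  ⟨fun h => ZMod.natCast_ne_zero_of_pos_of_lt hk0 hkn (left_eq_add.mp h),
    k, hk0, hkp, Or.inr (add_sub_cancel_left u k)⟩

def arc (n p : ℕ) (j : ZMod n) : Set (ZMod n) := {v | ∃ i : ℕ, i ≤ p ∧ v = j + i}

theorem isClique_arc (hpn : p < n) (j : ZMod n) :
    (cyclePower n p).IsClique (arc n p j) := by
  have adj_of_lt : ∀ i i' : ℕ, i < i' → i' ≤ p → (cyclePower n p).Adj (j + i) (j + i') := by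
    intro i i' hii' hi'
    have : j + (i' : ZMod n) = j + i + (i' - i : ℕ) := by push_cast [hii'.le]; ring
    rw [this]
    exact adj_add_natCast _ (by omega) (by omega) (by omega)
  rintro _ ⟨i, hi, rfl⟩ _ ⟨i', hi', rfl⟩ hne
  rcases lt_or_gt_of_ne (fun h : i = i' => hne (h ▸ rfl)) with h | h
  · exact adj_of_lt i i' h hi'
  · exact (adj_of_lt i' i h hi).symm

def triangle (n p : ℕ) : Set (ZMod n) := {0, (p : ZMod n), (p : ZMod n) + p}

theorem isClique_triangle (h2p : 2 * p < n) (h3p : n ≤ 3 * p) :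
    (cyclePower n p).IsClique (triangle n p) := by
  have hpn : p < n := by omega
  have h0p : (cyclePower n p).Adj 0 p := by
    simpa using adj_add_natCast (0 : ZMod n) (by omega) le_rfl hpn
  have hp2p : (cyclePower n p).Adj p (p + p) := adj_add_natCast _ (by omega) le_rfl hpn
  -- the edge `{2p, 0}` wraps around the cycle, with length `n - 2p ≤ p`
  have h2p0 : (cyclePower n p).Adj (p + p) 0 := by
    have : (0 : ZMod n) = p + p + (n - 2 * p : ℕ) := by
      push_cast [h2p.le, ZMod.natCast_self]; ring
    rw [this]
    exact adj_add_natCast _ (by omega) (by omega) (by omega)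
  rw [triangle, isClique_insert, isClique_pair]
  simp only [Set.mem_insert_iff, Set.mem_singleton_iff, forall_eq_or_imp, forall_eq]
  exact ⟨fun _ => hp2p, fun _ => h0p, fun _ => h2p0.symm⟩

open scoped Classical in
noncomputable def cover (n p : ℕ) [NeZero n] : Finset (Set (ZMod n)) :=
  insert (triangle n p) (({0, (p : ZMod n)} : Finset (ZMod n))ᶜ.image (arc n p))

variable [NeZero n]

theorem triangle_mem_cover : triangle n p ∈ cover n p := by
  rw [cover]
  exact Finset.mem_insert_self _ _

theorem arc_mem_cover {j : ZMod n} (hj0 : j ≠ 0) (hjp : j ≠ p) : arc n p j ∈ cover n p := by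
  rw [cover]
  exact Finset.mem_insert_of_mem (Finset.mem_image_of_mem _ (by simp [hj0, hjp]))

theorem card_cover_le (hp0 : 0 < p) (hpn : p < n) : (cover n p).card ≤ n - 1 := by
  classical
  have h0p : (0 : ZMod n) ≠ p := (ZMod.natCast_ne_zero_of_pos_of_lt hp0 hpn).symm
  rw [cover]
  calc _
      ≤ (({0, (p : ZMod n)} : Finset (ZMod n))ᶜ.image (arc n p)).card + 1 :=
        Finset.card_insert_le _ _
    _ ≤ ({0, (p : ZMod n)} : Finset (ZMod n))ᶜ.card + 1 := by gcongr; exact Finset.card_image_le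
    _ = n - 1 := by rw [Finset.card_compl, ZMod.card, Finset.card_pair h0p]; omega

theorem exists_mem_cover (hpn : p + 1 < n) (u : ZMod n) {k : ℕ} (hk0 : 1 ≤ k) (hkp : k ≤ p) :
    ∃ C ∈ cover n p, u ∈ C ∧ u + k ∈ C := by
  by_cases hu : u ≠ 0 ∧ u ≠ p
  · exact ⟨arc n p u, arc_mem_cover hu.1 hu.2, ⟨0, by omega, by simp⟩, ⟨k, hkp, rfl⟩⟩
  have hu : u = 0 ∨ u = p := by tauto
  rcases hkp.lt_or_eq with hkp | rfl
  · have cast_ne {a b : ℕ} (ha : a < n) (hb : b < n) (hab : a ≠ b) : (a : ZMod n) ≠ b :=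
      fun h => hab ((ZMod.natCast_eq_natCast_iff_of_lt ha hb).mp h)
    have hj : u - 1 ≠ 0 ∧ u - 1 ≠ p := by
      rcases hu with rfl | rfl
      · refine ⟨fun h => cast_ne (a := 1) (b := 0) ?_ ?_ ?_ ?_,
          fun h => cast_ne (a := p + 1) (b := 0) ?_ ?_ ?_ ?_⟩ <;>
          first | omega | (push_cast; linear_combination -h)
      · refine ⟨fun h => cast_ne (a := p) (b := 1) ?_ ?_ ?_ ?_,
          fun h => cast_ne (a := 1) (b := 0) ?_ ?_ ?_ ?_⟩ <;>
          first | omega | (push_cast; linear_combination h) | (push_cast; linear_combination -h)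
    exact ⟨arc n p (u - 1), arc_mem_cover hj.1 hj.2, ⟨1, by omega, by push_cast; ring⟩,
      ⟨k + 1, by omega, by push_cast; ring⟩⟩
  · rcases hu with rfl | rfl <;>
      exact ⟨_, triangle_mem_cover, by simp [triangle], by simp [triangle]⟩

theorem isEdgeCliqueCover_cover (h2p : 2 * p < n) (h3p : n ≤ 3 * p) :
    IsEdgeCliqueCover (cyclePower n p) (cover n p) := by
  refine ⟨fun C hC => ?_, ?_⟩
  · rcases Finset.mem_insert.mp hC with rfl | hC
    · exact isClique_triangle h2p h3p
    · obtain ⟨j, -, rfl⟩ := Finset.mem_image.mp hC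
      exact isClique_arc (by omega) j
  · rintro u v ⟨-, k, hk0, hkp, h | h⟩
    · obtain ⟨C, hC, hv, hu⟩ := exists_mem_cover (by omega) v hk0 hkp
      exact ⟨C, hC, by rwa [← h, add_sub_cancel] at hu, hv⟩
    · obtain ⟨C, hC, hu, hv⟩ := exists_mem_cover (by omega) u hk0 hkp
      exact ⟨C, hC, hu, by rwa [← h, add_sub_cancel] at hv⟩

end cyclePower

theorem edgeCliqueCoverNumber_cyclePower_le {n p : ℕ} (h2p : 2 * p < n) (h3p : n ≤ 3 * p) :
    edgeCliqueCoverNumber (cyclePower n p) ≤ n - 1 := by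
  have : NeZero n := ⟨by omega⟩
  exact (edgeCliqueCoverNumber_le_card (cyclePower.isEdgeCliqueCover_cover h2p h3p)).trans
    (cyclePower.card_cover_le (by omega) (by omega))

theorem stmt_2_general (p n : ℕ) (hn1 : 2 * p + 2 ≤ n) (hn2 : n ≤ 3 * p) :
    edgeCliqueCoverNumber (cyclePower n p) ≤ n - 1 :=
  edgeCliqueCoverNumber_cyclePower_le (by omega) hn2

/-- For positive integers `p, n` with `2p + 2 ≤ n ≤ 3p`, the clique cover number of the `p`-th
power of the cycle `C_n` is at most `n - 1`. -/
theorem stmt_2 (p n : ℕ) (hp : 1 ≤ p) (hn1 : 2 * p + 2 ≤ n) (hn2 : n ≤ 3 * p) :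
    edgeCliqueCoverNumber (cyclePower n p) ≤ n - 1 :=
  stmt_2_general p n hn1 hn2
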